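/- arXiv:2505.22866 — 3 statements merged into one kernel-verified Lean document; each statement's English description precedes it below -/
import Mathlib

section
/- Suppose: (i) there is L > 0 such that for every t ∈ [0,1] and every dyadic step size h', the map x ↦ s(x, t, h') is L-Lipschitz; (ii) there is L_v ≥ 0 such that for every t ∈ [0,1] the map x ↦ v(t, x) is L_v-Lipschitz and for every x ∈ ℝ^d the map t ↦ v(t, x) is L_v-Lipschitz; (iii) there is M_v ≥ 0 with ‖v(t, z_t)‖_{L²} ≤ M_v for every t ∈ {0, h₀, 2h₀, …, 1 − h₀}; (iv) flow-matching error: ‖s(z_t, t, h₀) − v(t, z_t)‖_{L²} ≤ ε_FM for every t ∈ {0, h₀, 2h₀, …, 1 − h₀}; (v) self-consistency error: for every dyadic step size h' ≤ 1/2 and every t ∈ {0, h', 2h', …, 1 − 2h'}, ‖s(z_t, t, h')/2 + s(z_t + h'·s(z_t, t, h'), t + h', h')/2 − s(z_t, t, 2h')‖_{L²} ≤ ε_SC. Let h = 2ⁿ·h₀ be a dyadic step size and define the shortcut sampling process ẑ by ẑ_0 := z_0 and ẑ_{t+h} := ẑ_t + h·s(ẑ_t, t, h) for t = 0, h, 2h,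 …, 1 − h. Then ‖ẑ_1 − z_1‖_{L²} ≤ (1/L)·((1 + L·h)^{1/h} − 1)·exp(L·h/2)·(L_v·e^{L_v·h₀}·h₀·(M_v + 1) + ε_FM + n·ε_SC). -/
open MeasureTheory Set

/-- The `L²` norm of a random vector: `‖X‖_{L²} = (E[‖X‖²])^{1/2}`. -/
noncomputable def L2norm {Ω : Type*} [MeasurableSpace Ω] (P : Measure Ω)
    {d : ℕ} (X : Ω → EuclideanSpace ℝ (Fin d)) : ℝ :=
  Real.sqrt (∫ ω, ‖X ω‖ ^ 2 ∂P)

open scoped ENNReal NNReal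

set_option maxHeartbeats 1000000

section L2
variable {Ω : Type*} [MeasurableSpace Ω] {P : Measure Ω} {d : ℕ}
  {X Y : Ω → EuclideanSpace ℝ (Fin d)}

lemma L2norm_nonneg (X : Ω → EuclideanSpace ℝ (Fin d)) : 0 ≤ L2norm P X := Real.sqrt_nonneg _

lemma eLpNorm_eq_L2norm (hX : MemLp X 2 P) : eLpNorm X 2 P = ENNReal.ofReal (L2norm P X) := by
  rw [hX.eLpNorm_eq_integral_rpow_norm (by norm_num) (by norm_num)]
  congr 1
  rw [L2norm, Real.sqrt_eq_rpow]
  norm_num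

lemma L2norm_eq_toReal (hX : MemLp X 2 P) : L2norm P X = (eLpNorm X 2 P).toReal := by
  rw [eLpNorm_eq_L2norm hX, ENNReal.toReal_ofReal (L2norm_nonneg X)]

lemma L2norm_add_le (hX : MemLp X 2 P) (hY : MemLp Y 2 P) :
    L2norm P (fun ω => X ω + Y ω) ≤ L2norm P X + L2norm P Y := by
  have h := eLpNorm_add_le hX.1 hY.1 (by norm_num : (1:ℝ≥0∞) ≤ 2)
  show L2norm P (X + Y) ≤ L2norm P X + L2norm P Y
  rw [L2norm_eq_toReal (hX.add hY), L2norm_eq_toReal hX, L2norm_eq_toReal hY,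
    ← ENNReal.toReal_add hX.2.ne hY.2.ne]
  exact ENNReal.toReal_mono (ENNReal.add_ne_top.2 ⟨hX.2.ne, hY.2.ne⟩) h

lemma L2norm_congr (h : ∀ ω, ‖X ω‖ = ‖Y ω‖) : L2norm P X = L2norm P Y := by
  unfold L2norm
  congr 1
  exact integral_congr_ae (Filter.Eventually.of_forall fun ω => by simp [h ω])

lemma L2norm_le_smul {c : ℝ} (hc : 0 ≤ c) (hX : AEStronglyMeasurable X P) (hY : MemLp Y 2 P)
    (hle : ∀ ω, ‖X ω‖ ≤ c * ‖Y ω‖) : L2norm P X ≤ c * L2norm P Y := by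
  have hcY : MemLp (fun ω => c • Y ω) 2 P := hY.const_smul c
  have h1 : eLpNorm X 2 P ≤ eLpNorm (fun ω => c • Y ω) 2 P := by
    apply eLpNorm_mono fun ω => ?_
    rw [norm_smul, Real.norm_eq_abs, abs_of_nonneg hc]
    exact hle ω
  have hXm : MemLp X 2 P := hcY.of_le hX (Filter.Eventually.of_forall fun ω => by
    simpa [norm_smul, abs_of_nonneg hc] using hle ω)
  rw [L2norm_eq_toReal hXm, L2norm_eq_toReal hY]
  calc (eLpNorm X 2 P).toReal ≤ (eLpNorm (fun ω => c • Y ω) 2 P).toReal :=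
        ENNReal.toReal_mono hcY.2.ne h1
    _ = c * (eLpNorm Y 2 P).toReal := by
        rw [show (fun ω => c • Y ω) = c • Y from rfl, eLpNorm_const_smul]
        simp [ENNReal.toReal_mul, ENNReal.smul_def, Real.norm_eq_abs, abs_of_nonneg hc]

lemma L2norm_smul_le (c : ℝ) (hXm : MemLp X 2 P) :
    L2norm P (fun ω => c • X ω) ≤ |c| * L2norm P X :=
  L2norm_le_smul (abs_nonneg c) (hXm.const_smul c).1 hXm
    (fun ω => by rw [norm_smul, Real.norm_eq_abs])


lemma L2norm_le_of_ptwise {Ω : Type*} [MeasurableSpace Ω] {P : Measure Ω} [IsProbabilityMeasure P]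
    {d : ℕ} {X V : Ω → EuclideanSpace ℝ (Fin d)}
    (hX : AEStronglyMeasurable X P) (hV : MemLp V 2 P) {c : ℝ} (hc : 0 ≤ c)
    (hle : ∀ ω, ‖X ω‖ ≤ c * ‖V ω‖ + c) :
    L2norm P X ≤ c * L2norm P V + c := by
  have hVn : MemLp (fun ω => c * ‖V ω‖) 2 P := (hV.norm).const_mul c
  have hgm : MemLp (fun ω => c * ‖V ω‖ + c) 2 P := hVn.add (memLp_const c)
  have hXm : MemLp X 2 P := hgm.of_le hX (Filter.Eventually.of_forall fun ω => by
    have h1 := hle ω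
    have h2 : 0 ≤ c * ‖V ω‖ + c := by positivity
    simpa [Real.norm_eq_abs, abs_of_nonneg h2] using h1)
  have h1 : eLpNorm X 2 P ≤ eLpNorm (fun ω => c * ‖V ω‖ + c) 2 P :=
    eLpNorm_mono_real hle
  have h2 : eLpNorm (fun ω => c * ‖V ω‖ + c) 2 P
      ≤ eLpNorm (fun ω => c * ‖V ω‖) 2 P + eLpNorm (fun _ : Ω => c) 2 P :=
    eLpNorm_add_le hVn.1 aestronglyMeasurable_const (by norm_num)
  have h3 : (eLpNorm (fun ω => c * ‖V ω‖) 2 P).toReal = c * L2norm P V := by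
    have he : (fun ω => c * ‖V ω‖) = c • (fun ω => ‖V ω‖) := rfl
    rw [he, eLpNorm_const_smul, eLpNorm_norm, ENNReal.toReal_mul, ← L2norm_eq_toReal hV]
    simp [Real.norm_eq_abs, abs_of_nonneg hc]
  have h4 : (eLpNorm (fun _ : Ω => c) 2 P).toReal = c := by
    rw [eLpNorm_const' c (by norm_num) (by norm_num)]
    simp [measure_univ, Real.norm_eq_abs, abs_of_nonneg hc]
  have hfin : eLpNorm (fun ω => c * ‖V ω‖) 2 P + eLpNorm (fun _ : Ω => c) 2 P ≠ ⊤ :=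
    ENNReal.add_ne_top.2 ⟨hVn.2.ne, (memLp_const c).2.ne⟩
  rw [L2norm_eq_toReal hXm]
  calc (eLpNorm X 2 P).toReal
      ≤ (eLpNorm (fun ω => c * ‖V ω‖) 2 P + eLpNorm (fun _ : Ω => c) 2 P).toReal :=
        ENNReal.toReal_mono hfin (h1.trans h2)
    _ = c * L2norm P V + c := by
        rw [ENNReal.toReal_add hVn.2.ne (memLp_const c).2.ne, h3, h4]

end L2

private lemma numStep (k : ℕ) (h₀ E B₀ L ε_SC : ℝ) (hpk : 0 < 2^k*h₀)
    (hC0 : 0 ≤ B₀ + (k:ℝ)*ε_SC) (hεSC : 0 ≤ ε_SC)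
    (hE1 : 1 ≤ E) (hadd : L * (2^k*h₀) / 2 + 1 ≤ E) :
    2^k*h₀ * E * (B₀ + (k:ℝ)*ε_SC) + (2^k*h₀ * E * (B₀ + (k:ℝ)*ε_SC)
      + 2^k*h₀ * L * (2^k*h₀ * E * (B₀ + (k:ℝ)*ε_SC))) + 2^(k+1)*h₀*ε_SC
    ≤ 2^(k+1)*h₀ * (E*E) * (B₀ + ((k:ℝ)+1)*ε_SC) := by
  have hps : (2:ℝ)^(k+1) = 2*2^k := by ring
  rw [hps]
  have hE0 : (0:ℝ) ≤ E := by linarith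
  have q1 := mul_le_mul_of_nonneg_left hadd (mul_nonneg (mul_nonneg hpk.le hE0) hC0)
  have q2 : (1:ℝ)*1 ≤ E*E := mul_le_mul hE1 hE1 (by norm_num) hE0
  have q3 := mul_le_mul_of_nonneg_left q2 (mul_nonneg (by positivity : (0:ℝ) ≤ 2^k*h₀) hεSC)
  nlinarith [q1, q3]

private lemma numGlob (i : ℕ) (P L E C e D : ℝ) (hP : 0 < P) (hL : 0 < L)
    (hE : 0 ≤ E) (hC : 0 ≤ C)
    (he : e ≤ (1/L)*((1+L*P)^i - 1)*E*C) (hD : D ≤ P*E*C) :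
    e + P*L*e + D ≤ (1/L)*((1+L*P)^(i+1) - 1)*E*C := by
  have h1 : (0:ℝ) ≤ 1 + L*P := by nlinarith
  have key : (1+L*P)*((1/L)*((1+L*P)^i - 1)) + P = (1/L)*((1+L*P)^(i+1) - 1) := by
    field_simp
    ring
  have key2 : ((1+L*P)*((1/L)*((1+L*P)^i - 1)) + P) * (E*C)
      = (1/L)*((1+L*P)^(i+1) - 1)*(E*C) := by rw [key]
  have q := mul_le_mul_of_nonneg_left he h1
  nlinarith [q, hD, key2, mul_nonneg hE hC]


/-- error of the shortcut sampling process with dyadic step `h = 2^n h₀`: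
`‖ẑ_1 − z_1‖_{L²} ≤ (1/L)((1+Lh)^{1/h} − 1) e^{Lh/2}
  (L_v e^{L_v h₀} h₀ (M_v+1) + ε_FM + n ε_SC)`. -/
theorem stmt0 {d : ℕ} (hd : 1 ≤ d) {Ω : Type*} [MeasurableSpace Ω]
    (P : Measure Ω) [IsProbabilityMeasure P]
    (K : ℕ) (hK : 1 ≤ K) (h₀ : ℝ) (hh₀ : h₀ = 1 / 2 ^ K)
    (v : ℝ → EuclideanSpace ℝ (Fin d) → EuclideanSpace ℝ (Fin d))
    (z : ℝ → Ω → EuclideanSpace ℝ (Fin d))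
    (hzode : ∀ ω, ∀ t ∈ Icc (0 : ℝ) 1,
      HasDerivWithinAt (fun τ => z τ ω) (v t (z t ω)) (Icc (0 : ℝ) 1) t)
    (hzmem : ∀ t ∈ Icc (0 : ℝ) 1, MemLp (z t) 2 P)
    (s : EuclideanSpace ℝ (Fin d) → ℝ → ℝ → EuclideanSpace ℝ (Fin d))
    (L : ℝ) (hL : 0 < L)
    (hsLip : ∀ t ∈ Icc (0 : ℝ) 1, ∀ k ≤ K, ∀ x y : EuclideanSpace ℝ (Fin d),
      ‖s x t (2 ^ k * h₀) - s y t (2 ^ k * h₀)‖ ≤ L * ‖x - y‖)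
    (L_v : ℝ) (hLv : 0 ≤ L_v)
    (hvLipx : ∀ t ∈ Icc (0 : ℝ) 1, ∀ x y : EuclideanSpace ℝ (Fin d),
      ‖v t x - v t y‖ ≤ L_v * ‖x - y‖)
    (hvLipt : ∀ x : EuclideanSpace ℝ (Fin d), ∀ t ∈ Icc (0 : ℝ) 1, ∀ t'' ∈ Icc (0 : ℝ) 1,
      ‖v t x - v t'' x‖ ≤ L_v * |t - t''|)
    (M_v : ℝ) (hMv : 0 ≤ M_v)
    (hMvB : ∀ i : ℕ, i < 2 ^ K →
      L2norm P (fun ω => v (i * h₀) (z (i * h₀) ω)) ≤ M_v)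
    (ε_FM : ℝ)
    (hFM : ∀ i : ℕ, i < 2 ^ K →
      L2norm P (fun ω =>
        s (z (i * h₀) ω) (i * h₀) h₀ - v (i * h₀) (z (i * h₀) ω)) ≤ ε_FM)
    (ε_SC : ℝ)
    (hSC : ∀ k : ℕ, k + 1 ≤ K → ∀ i : ℕ, (i + 2) * 2 ^ k ≤ 2 ^ K →
      L2norm P (fun ω =>
        (1 / 2 : ℝ) • s (z (i * (2 ^ k * h₀)) ω) (i * (2 ^ k * h₀)) (2 ^ k * h₀)
        + (1 / 2 : ℝ) • s (z (i * (2 ^ k * h₀)) ω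
              + (2 ^ k * h₀) • s (z (i * (2 ^ k * h₀)) ω) (i * (2 ^ k * h₀)) (2 ^ k * h₀))
            (i * (2 ^ k * h₀) + 2 ^ k * h₀) (2 ^ k * h₀)
        - s (z (i * (2 ^ k * h₀)) ω) (i * (2 ^ k * h₀)) (2 * (2 ^ k * h₀))) ≤ ε_SC)
    (n : ℕ) (hn : n ≤ K) (h : ℝ) (hh : h = 2 ^ n * h₀)
    (zhat : ℕ → Ω → EuclideanSpace ℝ (Fin d))
    (hzhat0 : ∀ ω, zhat 0 ω = z 0 ω)
    (hzhatstep : ∀ i : ℕ, i < 2 ^ (K - n) → ∀ ω,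
      zhat (i + 1) ω = zhat i ω + h • s (zhat i ω) (i * h) h) :
    L2norm P (fun ω => zhat (2 ^ (K - n)) ω - z 1 ω)
      ≤ (1 / L) * ((1 + L * h) ^ 2 ^ (K - n) - 1) * Real.exp (L * h / 2)
        * (L_v * Real.exp (L_v * h₀) * h₀ * (M_v + 1) + ε_FM + n * ε_SC) := by
  have h2K : (0:ℝ) < 2^K := by positivity
  have h₀pos : 0 < h₀ := by rw [hh₀]; positivity
  have hKh₀ : (2:ℝ)^K * h₀ = 1 := by rw [hh₀]; field_simp
  have tmem : ∀ k i : ℕ, i * 2^k ≤ 2^K → (i:ℝ) * (2^k * h₀) ∈ Icc (0:ℝ) 1 := by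
    intro k i hik
    have hc : ((i:ℝ) * 2^k) ≤ 2^K := by exact_mod_cast hik
    constructor
    · positivity
    · nlinarith [h₀pos, hKh₀]
  have memS : ∀ k ≤ K, ∀ t ∈ Icc (0:ℝ) 1, ∀ X : Ω → EuclideanSpace ℝ (Fin d),
      MemLp X 2 P → MemLp (fun ω => s (X ω) t (2^k*h₀)) 2 P := by
    intro k hk t ht X hX
    have lip : LipschitzWith L.toNNReal (fun x => s x t (2^k*h₀) - s 0 t (2^k*h₀)) := by
      apply LipschitzWith.of_dist_le_mul
      intro x y
      simp only [dist_eq_norm, sub_sub_sub_cancel_right, Real.coe_toNNReal L hL.le]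
      exact hsLip t ht k hk x y
    have h1 := (lip.comp_memLp (by simp) hX).add (memLp_const (μ := P) (s 0 t (2^k*h₀)))
    exact h1.ae_eq (Filter.Eventually.of_forall fun ω => by simp [Function.comp])
  have memV : ∀ t ∈ Icc (0:ℝ) 1, ∀ X : Ω → EuclideanSpace ℝ (Fin d),
      MemLp X 2 P → MemLp (fun ω => v t (X ω)) 2 P := by
    intro t ht X hX
    have lip : LipschitzWith L_v.toNNReal (fun x => v t x - v t 0) := by
      apply LipschitzWith.of_dist_le_mul
      intro x y
      simp only [dist_eq_norm, sub_sub_sub_cancel_right, Real.coe_toNNReal L_v hLv]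
      exact hvLipx t ht x y
    have h1 := (lip.comp_memLp (by simp) hX).add (memLp_const (μ := P) (v t 0))
    exact h1.ae_eq (Filter.Eventually.of_forall fun ω => by simp [Function.comp])
  have odeStep : ∀ t : ℝ, 0 ≤ t → t + h₀ ≤ 1 → ∀ ω,
      ‖z (t + h₀) ω - z t ω - h₀ • v t (z t ω)‖
        ≤ L_v * Real.exp (L_v * h₀) * h₀^2 * (‖v t (z t ω)‖ + 1) := by
    intro t ht0 ht1 ω
    set c := v t (z t ω) with hc
    set f : ℝ → EuclideanSpace ℝ (Fin d) := fun τ => z τ ω - z t ω - (τ - t) • c with hf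
    have hsub : Icc t (t+h₀) ⊆ Icc (0:ℝ) 1 := Icc_subset_Icc ht0 ht1
    have hcont : ContinuousOn f (Icc t (t+h₀)) := by
      apply ContinuousOn.sub (ContinuousOn.sub ?_ continuousOn_const)
        (((continuous_id.sub continuous_const).smul continuous_const).continuousOn)
      exact fun τ hτ => ((hzode ω τ (hsub hτ)).continuousWithinAt).mono hsub
    have hderiv : ∀ τ ∈ Ico t (t+h₀), HasDerivWithinAt f (v τ (z τ ω) - c) (Ici τ) τ := by
      intro τ hτ
      have hτ01 : τ ∈ Ico (0:ℝ) 1 := ⟨le_trans ht0 hτ.1, lt_of_lt_of_le hτ.2 ht1⟩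
      have h1 : HasDerivWithinAt (fun τ => z τ ω) (v τ (z τ ω)) (Ici τ) τ :=
        (hzode ω τ (Ico_subset_Icc_self hτ01)).mono_of_mem_nhdsWithin (Icc_mem_nhdsGE_of_mem hτ01)
      have h2 : HasDerivWithinAt (fun τ : ℝ => (τ - t) • c) ((1:ℝ) • c) (Ici τ) τ :=
        ((hasDerivWithinAt_id τ (Ici τ)).sub_const t).smul_const c
      have h3 := (h1.sub_const (z t ω)).sub h2
      rw [one_smul] at h3
      exact h3
    have hbound : ∀ τ ∈ Ico t (t+h₀), ‖v τ (z τ ω) - c‖ ≤ L_v * ‖f τ‖ + L_v * h₀ * (‖c‖ + 1) := by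
      intro τ hτ
      have hτ01 : τ ∈ Icc (0:ℝ) 1 :=
        ⟨le_trans ht0 hτ.1, le_of_lt (lt_of_lt_of_le hτ.2 ht1)⟩
      have ht01 : t ∈ Icc (0:ℝ) 1 := ⟨ht0, by linarith [h₀pos]⟩
      have e1 : ‖v τ (z τ ω) - c‖ ≤ ‖v τ (z τ ω) - v τ (z t ω)‖ + ‖v τ (z t ω) - v t (z t ω)‖ :=
        norm_sub_le_norm_sub_add_norm_sub _ _ _
      have e2 := hvLipx τ hτ01 (z τ ω) (z t ω)
      have e3 := hvLipt (z t ω) τ hτ01 t ht01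
      have e4 : ‖z τ ω - z t ω‖ ≤ ‖f τ‖ + (τ - t) * ‖c‖ := by
        have : z τ ω - z t ω = f τ + (τ - t) • c := by simp [hf]
        rw [this]
        calc ‖f τ + (τ - t) • c‖ ≤ ‖f τ‖ + ‖(τ - t) • c‖ := norm_add_le _ _
          _ = ‖f τ‖ + |τ - t| * ‖c‖ := by rw [norm_smul, Real.norm_eq_abs]
          _ = ‖f τ‖ + (τ - t) * ‖c‖ := by rw [abs_of_nonneg (by linarith [hτ.1])]
      have e5 : |τ - t| ≤ h₀ := by
        rw [abs_of_nonneg (by linarith [hτ.1])]; linarith [hτ.2]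
      have e6 : τ - t ≤ h₀ := by linarith [hτ.2]
      nlinarith [norm_nonneg c, norm_nonneg (f τ), hLv, mul_le_mul_of_nonneg_left e4 hLv,
        mul_le_mul_of_nonneg_left e5 hLv, mul_nonneg hLv (norm_nonneg c),
        mul_le_mul_of_nonneg_right e6 (mul_nonneg hLv (norm_nonneg c))]
    have hf_t : ‖f t‖ ≤ 0 := by simp [hf]
    have key := norm_le_gronwallBound_of_norm_deriv_right_le hcont hderiv hf_t hbound
      (t+h₀) (right_mem_Icc.2 (by linarith [h₀pos]))
    have harg : t + h₀ - t = h₀ := by ring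
    rw [harg] at key
    have hgb : gronwallBound 0 L_v (L_v*h₀*(‖c‖+1)) h₀ ≤ L_v * Real.exp (L_v*h₀) * h₀^2 * (‖c‖+1) := by
      rcases eq_or_lt_of_le hLv with hL0 | hL0
      · rw [← hL0]; simp [gronwallBound_K0]
      · rw [gronwallBound_of_K_ne_0 (ne_of_gt hL0)]
        have h2 := Real.exp_pos (L_v*h₀)
        have he : Real.exp (L_v*h₀) - 1 ≤ L_v*h₀*Real.exp (L_v*h₀) := by
          have h1 := Real.add_one_le_exp (-(L_v*h₀))
          rw [Real.exp_neg] at h1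
          have h3 : (Real.exp (L_v*h₀))⁻¹ * Real.exp (L_v*h₀) = 1 :=
            inv_mul_cancel₀ (ne_of_gt h2)
          nlinarith
        have hd : L_v*h₀*(‖c‖+1)/L_v = h₀*(‖c‖+1) := by field_simp
        simp only [zero_mul, zero_add, hd]
        have hm := mul_le_mul_of_nonneg_left he
          (by positivity : (0:ℝ) ≤ h₀ * (‖c‖ + 1))
        nlinarith [hm]
    have hfinal : ‖z (t+h₀) ω - z t ω - h₀ • c‖ = ‖f (t+h₀)‖ := by
      simp [hf, add_sub_cancel_left]
    rw [hfinal]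
    exact le_trans key hgb
  have hεFM : 0 ≤ ε_FM := le_trans (L2norm_nonneg _) (hFM 0 (by positivity))
  have hεSC : 0 ≤ ε_SC := le_trans (L2norm_nonneg _)
    (hSC 0 hK 0 (by simpa using Nat.pow_le_pow_right (by norm_num) hK))
  set B₀ : ℝ := L_v * Real.exp (L_v * h₀) * h₀ * (M_v + 1) + ε_FM with hB₀def
  have hB₀ : 0 ≤ B₀ := by
    have : 0 ≤ L_v * Real.exp (L_v * h₀) * h₀ * (M_v + 1) := by positivity
    linarith
  have local_err : ∀ k : ℕ, k ≤ K → ∀ i : ℕ, (i+1) * 2^k ≤ 2^K →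
      L2norm P (fun ω => z ((i:ℝ)*(2^k*h₀) + 2^k*h₀) ω - z ((i:ℝ)*(2^k*h₀)) ω
          - ((2:ℝ)^k*h₀) • s (z ((i:ℝ)*(2^k*h₀)) ω) ((i:ℝ)*(2^k*h₀)) (2^k*h₀))
        ≤ (2^k*h₀) * Real.exp (L * (2^k*h₀) / 2) * (B₀ + k * ε_SC) := by
    intro k
    induction k with
    | zero =>
      intro _ i hik
      simp only [pow_zero, one_mul, mul_one] at hik ⊢
      rw [Nat.cast_zero, zero_mul, add_zero]
      have hiK : i < 2^K := by omega
      have ht : (i:ℝ)*h₀ ∈ Icc (0:ℝ) 1 := by simpa using tmem 0 i (by omega)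
      have ht1' : ((i:ℝ)+1)*h₀ ∈ Icc (0:ℝ) 1 := by
        have := tmem 0 (i+1) (by omega)
        simpa using this
      have ht1 : (i:ℝ)*h₀ + h₀ ≤ 1 := by
        have := ht1'.2; nlinarith
      set t := (i:ℝ)*h₀ with htdef
      have hz_t : MemLp (z t) 2 P := hzmem t ht
      have hz_t1 : MemLp (z (t+h₀)) 2 P := hzmem _ ⟨by positivity, ht1⟩
      have hv_t : MemLp (fun ω => v t (z t ω)) 2 P := memV t ht _ hz_t
      have hs_t : MemLp (fun ω => s (z t ω) t h₀) 2 P := by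
        have := memS 0 (by omega) t ht _ hz_t
        simpa using this
      have hdecomp : (fun ω => z (t+h₀) ω - z t ω - h₀ • s (z t ω) t h₀)
          = (fun ω => (z (t+h₀) ω - z t ω - h₀ • v t (z t ω))
              + h₀ • (v t (z t ω) - s (z t ω) t h₀)) := by
        funext ω; module
      have hA : MemLp (fun ω => z (t+h₀) ω - z t ω - h₀ • v t (z t ω)) 2 P :=
        (hz_t1.sub hz_t).sub (hv_t.const_smul h₀)
      have hB : MemLp (fun ω => h₀ • (v t (z t ω) - s (z t ω) t h₀)) 2 P :=
        (hv_t.sub hs_t).const_smul h₀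
      have tri := L2norm_add_le hA hB
      have bA : L2norm P (fun ω => z (t+h₀) ω - z t ω - h₀ • v t (z t ω))
          ≤ L_v * Real.exp (L_v*h₀) * h₀^2 * (M_v+1) := by
        set c := L_v * Real.exp (L_v*h₀) * h₀^2 with hcdef
        have hc : 0 ≤ c := by positivity
        have hbd := L2norm_le_of_ptwise hA.1 hv_t hc (fun ω => by
          have := odeStep t ht.1 ht1 ω
          nlinarith [this])
        have hMvt : L2norm P (fun ω => v t (z t ω)) ≤ M_v := hMvB i hiK
        nlinarith [L2norm_nonneg (P := P) (fun ω => v t (z t ω)), hbd, hMvt]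
      have bB : L2norm P (fun ω => h₀ • (v t (z t ω) - s (z t ω) t h₀)) ≤ h₀ * ε_FM := by
        have h1 := L2norm_smul_le (P := P) h₀ (hv_t.sub hs_t)
        have hcg : L2norm P (fun ω => v t (z t ω) - s (z t ω) t h₀)
            = L2norm P (fun ω => s (z t ω) t h₀ - v t (z t ω)) :=
          L2norm_congr (fun ω => norm_sub_rev _ _)
        have h2 := hFM i hiK
        rw [abs_of_nonneg h₀pos.le] at h1
        calc L2norm P (fun ω => h₀ • (v t (z t ω) - s (z t ω) t h₀))
            ≤ h₀ * L2norm P (fun ω => v t (z t ω) - s (z t ω) t h₀) := h1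
          _ = h₀ * L2norm P (fun ω => s (z t ω) t h₀ - v t (z t ω)) := by rw [hcg]
          _ ≤ h₀ * ε_FM := by nlinarith
      rw [hdecomp]
      have hexp1 : (1:ℝ) ≤ Real.exp (L * h₀ / 2) := by
        have h9 : 0 ≤ L * h₀ / 2 := by positivity
        linarith [Real.add_one_le_exp (L * h₀ / 2)]
      have hfin : L_v * Real.exp (L_v*h₀) * h₀^2 * (M_v+1) + h₀ * ε_FM = h₀ * B₀ := by
        rw [hB₀def]; ring
      nlinarith [tri, bA, bB, hexp1, hB₀, h₀pos,
        mul_le_mul_of_nonneg_left hexp1 (mul_nonneg h₀pos.le hB₀)]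
    | succ k ih =>
      intro hkK i hik
      have hkK' : k ≤ K := by omega
      have hg2 : (2*i+1+1) * 2^k ≤ 2^K := by
        calc (2*i+1+1) * 2^k = (i+1) * 2^(k+1) := by rw [pow_succ]; ring
          _ ≤ 2^K := hik
      have hg1 : (2*i+1) * 2^k ≤ 2^K :=
        le_trans (Nat.mul_le_mul_right _ (by omega)) hg2
      have IH1 := ih hkK' (2*i) hg1
      have IH2 := ih hkK' (2*i+1) hg2
      have hsc := hSC k hkK (2*i) (by
        calc (2*i+2) * 2^k = (i+1) * 2^(k+1) := by rw [pow_succ]; ring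
          _ ≤ 2^K := hik)
      set t := (i:ℝ)*(2^(k+1)*h₀) with htdef
      have e1 : ((2*i:ℕ):ℝ)*(2^k*h₀) = t := by rw [htdef]; push_cast; ring
      have e2 : ((2*i+1:ℕ):ℝ)*(2^k*h₀) = t + 2^k*h₀ := by rw [htdef]; push_cast; ring
      have er : (2:ℝ)*(2^k*h₀) = 2^(k+1)*h₀ := by ring
      rw [e1] at IH1 hsc
      rw [e2] at IH2
      rw [er] at hsc
      have e3 : t + 2^k*h₀ + 2^k*h₀ = t + 2^(k+1)*h₀ := by ring
      rw [e3] at IH2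
      -- membership of grid times
      have ht_mem : t ∈ Icc (0:ℝ) 1 := by
        rw [htdef]; exact tmem (k+1) i (le_trans (Nat.mul_le_mul_right _ (by omega)) hik)
      have hth_mem : t + 2^k*h₀ ∈ Icc (0:ℝ) 1 := by rw [← e2]; exact tmem k (2*i+1) hg1
      have ht2_mem : t + 2^(k+1)*h₀ ∈ Icc (0:ℝ) 1 := by
        have e4 : ((2*i+1+1:ℕ):ℝ)*(2^k*h₀) = t + 2^(k+1)*h₀ := by rw [htdef]; push_cast; ring
        rw [← e4]; exact tmem k (2*i+1+1) hg2
      -- MemLp facts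
      have hz_t : MemLp (z t) 2 P := hzmem t ht_mem
      have hz_th : MemLp (z (t + 2^k*h₀)) 2 P := hzmem _ hth_mem
      have hz_t2 : MemLp (z (t + 2^(k+1)*h₀)) 2 P := hzmem _ ht2_mem
      have hs1 : MemLp (fun ω => s (z t ω) t (2^k*h₀)) 2 P := memS k hkK' t ht_mem _ hz_t
      have hy : MemLp (fun ω => z t ω + ((2:ℝ)^k*h₀) • s (z t ω) t (2^k*h₀)) 2 P :=
        hz_t.add (hs1.const_smul ((2:ℝ)^k*h₀))
      have hs2 : MemLp (fun ω => s (z (t + 2^k*h₀) ω) (t + 2^k*h₀) (2^k*h₀)) 2 P :=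
        memS k hkK' _ hth_mem _ hz_th
      have hs3 : MemLp (fun ω => s (z t ω + ((2:ℝ)^k*h₀) • s (z t ω) t (2^k*h₀))
          (t + 2^k*h₀) (2^k*h₀)) 2 P := memS k hkK' _ hth_mem _ hy
      have hs4 : MemLp (fun ω => s (z t ω) t (2^(k+1)*h₀)) 2 P := memS (k+1) hkK t ht_mem _ hz_t
      have m1 : MemLp (fun ω => z (t + 2^k*h₀) ω - z t ω
          - ((2:ℝ)^k*h₀) • s (z t ω) t (2^k*h₀)) 2 P :=
        (hz_th.sub hz_t).sub (hs1.const_smul ((2:ℝ)^k*h₀))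
      have m2 : MemLp (fun ω => z (t + 2^(k+1)*h₀) ω - z (t + 2^k*h₀) ω
          - ((2:ℝ)^k*h₀) • s (z (t + 2^k*h₀) ω) (t + 2^k*h₀) (2^k*h₀)) 2 P :=
        (hz_t2.sub hz_th).sub (hs2.const_smul ((2:ℝ)^k*h₀))
      have m3 : MemLp (fun ω => ((2:ℝ)^k*h₀) • (s (z (t + 2^k*h₀) ω) (t + 2^k*h₀) (2^k*h₀)
          - s (z t ω + ((2:ℝ)^k*h₀) • s (z t ω) t (2^k*h₀)) (t + 2^k*h₀) (2^k*h₀))) 2 P :=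
        (hs2.sub hs3).const_smul ((2:ℝ)^k*h₀)
      have m4 : MemLp (fun ω => ((2:ℝ)^(k+1)*h₀) • ((1/2:ℝ) • s (z t ω) t (2^k*h₀)
          + (1/2:ℝ) • s (z t ω + ((2:ℝ)^k*h₀) • s (z t ω) t (2^k*h₀)) (t + 2^k*h₀) (2^k*h₀)
          - s (z t ω) t (2^(k+1)*h₀))) 2 P :=
        (((hs1.const_smul (1/2:ℝ)).add (hs3.const_smul (1/2:ℝ))).sub hs4).const_smul ((2:ℝ)^(k+1)*h₀)
      -- decomposition
      have hdecomp : (fun ω => z (t + 2^(k+1)*h₀) ω - z t ω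
            - ((2:ℝ)^(k+1)*h₀) • s (z t ω) t (2^(k+1)*h₀))
          = (fun ω =>
            ((z (t + 2^k*h₀) ω - z t ω - ((2:ℝ)^k*h₀) • s (z t ω) t (2^k*h₀))
            + (z (t + 2^(k+1)*h₀) ω - z (t + 2^k*h₀) ω
                - ((2:ℝ)^k*h₀) • s (z (t + 2^k*h₀) ω) (t + 2^k*h₀) (2^k*h₀))
            + ((2:ℝ)^k*h₀) • (s (z (t + 2^k*h₀) ω) (t + 2^k*h₀) (2^k*h₀)
                - s (z t ω + ((2:ℝ)^k*h₀) • s (z t ω) t (2^k*h₀)) (t + 2^k*h₀) (2^k*h₀)))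
            + ((2:ℝ)^(k+1)*h₀) • ((1/2:ℝ) • s (z t ω) t (2^k*h₀)
                + (1/2:ℝ) • s (z t ω + ((2:ℝ)^k*h₀) • s (z t ω) t (2^k*h₀))
                    (t + 2^k*h₀) (2^k*h₀)
                - s (z t ω) t (2^(k+1)*h₀))) := by
        funext ω
        have hps : (2:ℝ)^(k+1) = 2 * 2^k := by ring
        rw [hps]
        module
      -- triangle inequalities
      have tri1 := L2norm_add_le (((m1.add m2)).add m3) m4
      have tri2 := L2norm_add_le (m1.add m2) m3
      have tri3 := L2norm_add_le m1 m2
      -- bound A3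
      have hpk : (0:ℝ) < 2^k*h₀ := by positivity
      have b3 : L2norm P (fun ω => ((2:ℝ)^k*h₀) • (s (z (t + 2^k*h₀) ω) (t + 2^k*h₀) (2^k*h₀)
            - s (z t ω + ((2:ℝ)^k*h₀) • s (z t ω) t (2^k*h₀)) (t + 2^k*h₀) (2^k*h₀)))
          ≤ (2^k*h₀) * L * L2norm P (fun ω => z (t + 2^k*h₀) ω - z t ω
            - ((2:ℝ)^k*h₀) • s (z t ω) t (2^k*h₀)) := by
        apply L2norm_le_smul (by positivity) m3.1 m1
        intro ω
        rw [norm_smul, Real.norm_eq_abs, abs_of_nonneg hpk.le]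
        have hlip := hsLip (t + 2^k*h₀) hth_mem k hkK' (z (t + 2^k*h₀) ω)
          (z t ω + ((2:ℝ)^k*h₀) • s (z t ω) t (2^k*h₀))
        have harg : z (t + 2^k*h₀) ω - (z t ω + ((2:ℝ)^k*h₀) • s (z t ω) t (2^k*h₀))
            = z (t + 2^k*h₀) ω - z t ω - ((2:ℝ)^k*h₀) • s (z t ω) t (2^k*h₀) := by
          module
        rw [harg] at hlip
        exact le_trans (mul_le_mul_of_nonneg_left hlip hpk.le) (le_of_eq (by ring))
      -- bound A4
      have b4 : L2norm P (fun ω => ((2:ℝ)^(k+1)*h₀) • ((1/2:ℝ) • s (z t ω) t (2^k*h₀)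
            + (1/2:ℝ) • s (z t ω + ((2:ℝ)^k*h₀) • s (z t ω) t (2^k*h₀)) (t + 2^k*h₀) (2^k*h₀)
            - s (z t ω) t (2^(k+1)*h₀)))
          ≤ (2^(k+1)*h₀) * ε_SC := by
        have hin : MemLp (fun ω => (1/2:ℝ) • s (z t ω) t (2^k*h₀)
            + (1/2:ℝ) • s (z t ω + ((2:ℝ)^k*h₀) • s (z t ω) t (2^k*h₀))
                (t + 2^k*h₀) (2^k*h₀)
            - s (z t ω) t (2^(k+1)*h₀)) 2 P :=
          (((hs1.const_smul (1/2:ℝ)).add (hs3.const_smul (1/2:ℝ))).sub hs4)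
        have h1 := L2norm_smul_le (P := P) ((2:ℝ)^(k+1)*h₀) hin
        rw [abs_of_nonneg (by positivity : (0:ℝ) ≤ 2^(k+1)*h₀)] at h1
        exact le_trans h1 (by nlinarith [hsc, hεSC])
      -- combine
      rw [hdecomp]
      set E := Real.exp (L * (2^k*h₀) / 2) with hEdef
      have hE1 : (1:ℝ) ≤ E := by
        rw [hEdef]
        have h9 : 0 ≤ L * (2^k*h₀) / 2 := by positivity
        linarith [Real.add_one_le_exp (L * (2^k*h₀) / 2)]
      have hadd : L * (2^k*h₀) / 2 + 1 ≤ E := by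
        rw [hEdef]; exact Real.add_one_le_exp _
      have hE2 : Real.exp (L * (2^(k+1)*h₀) / 2) = E * E := by
        rw [hEdef, ← Real.exp_add]; congr 1; ring
      have hC0 : 0 ≤ B₀ + k * ε_SC := by positivity
      rw [hE2]
      have hE0 : (0:ℝ) ≤ E := by linarith
      have c3 : L2norm P (fun ω => ((2:ℝ)^k*h₀) • (s (z (t + 2^k*h₀) ω) (t + 2^k*h₀) (2^k*h₀)
            - s (z t ω + ((2:ℝ)^k*h₀) • s (z t ω) t (2^k*h₀)) (t + 2^k*h₀) (2^k*h₀)))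
          ≤ 2^k*h₀ * L * (2^k*h₀ * E * (B₀ + (k:ℕ) * ε_SC)) :=
        le_trans b3 (mul_le_mul_of_nonneg_left IH1 (mul_nonneg hpk.le hL.le))
      have hnum := numStep k h₀ E B₀ L ε_SC hpk hC0 hεSC hE1 hadd
      refine le_trans tri1 (le_trans (add_le_add (le_trans tri2
        (add_le_add (le_trans tri3 (add_le_add IH1 IH2)) c3)) b4) ?_)
      push_cast
      push_cast at hnum
      linarith [hnum]
  subst hh
  have hNK : 2^(K-n) * 2^n = 2^K := by rw [← pow_add, Nat.sub_add_cancel hn]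
  have hEn1 : (1:ℝ) ≤ Real.exp (L * (2^n*h₀) / 2) := by
    have h9 : 0 ≤ L * (2^n*h₀) / 2 := by positivity
    linarith [Real.add_one_le_exp (L * (2^n*h₀) / 2)]
  have hCn : 0 ≤ B₀ + (n:ℝ) * ε_SC := by positivity
  have glob : ∀ i : ℕ, i ≤ 2^(K-n) →
      MemLp (zhat i) 2 P ∧
      L2norm P (fun ω => zhat i ω - z ((i:ℝ)*(2^n*h₀)) ω)
        ≤ (1/L) * ((1+L*(2^n*h₀))^i - 1) * Real.exp (L*(2^n*h₀)/2) * (B₀ + n * ε_SC) := by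
    intro i
    induction i with
    | zero =>
      intro _
      have hz0 : zhat 0 = z 0 := funext hzhat0
      constructor
      · rw [hz0]; exact hzmem 0 ⟨le_refl 0, by norm_num⟩
      · simp only [Nat.cast_zero, zero_mul, pow_zero, sub_self, mul_zero, zero_mul]
        have he : (fun ω => zhat 0 ω - z 0 ω) = fun _ => (0 : EuclideanSpace ℝ (Fin d)) :=
          funext fun ω => by rw [hzhat0]; simp
        rw [he]
        have : L2norm P (fun _ : Ω => (0 : EuclideanSpace ℝ (Fin d))) = 0 := by
          simp [L2norm]
        rw [this]
    | succ i ihg =>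
      intro hi1
      have hiN : i < 2^(K-n) := by omega
      obtain ⟨hm, he⟩ := ihg (by omega)
      have hgrid : (i+1) * 2^n ≤ 2^K := by
        calc (i+1)*2^n ≤ 2^(K-n)*2^n := Nat.mul_le_mul_right _ hi1
          _ = 2^K := hNK
      have htmem : (i:ℝ)*(2^n*h₀) ∈ Icc (0:ℝ) 1 :=
        tmem n i (le_trans (Nat.mul_le_mul_right _ (by omega)) hgrid)
      have e5 : ((i+1:ℕ):ℝ)*(2^n*h₀) = (i:ℝ)*(2^n*h₀) + 2^n*h₀ := by push_cast; ring
      have ht1mem : (i:ℝ)*(2^n*h₀) + 2^n*h₀ ∈ Icc (0:ℝ) 1 := by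
        rw [← e5]; exact tmem n (i+1) hgrid
      have hstep := funext (hzhatstep i hiN)
      set t := (i:ℝ)*(2^n*h₀) with htdef
      have mz_t : MemLp (z t) 2 P := hzmem t htmem
      have mz_t1 : MemLp (z (t + 2^n*h₀)) 2 P := hzmem _ ht1mem
      have ms_zhat : MemLp (fun ω => s (zhat i ω) t (2^n*h₀)) 2 P := memS n hn t htmem _ hm
      have ms_z : MemLp (fun ω => s (z t ω) t (2^n*h₀)) 2 P := memS n hn t htmem _ mz_t
      have hmem1 : MemLp (zhat (i+1)) 2 P := by
        rw [hstep]
        exact hm.add (ms_zhat.const_smul ((2:ℝ)^n*h₀))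
      refine ⟨hmem1, ?_⟩
      have mG1 : MemLp (fun ω => zhat i ω - z t ω) 2 P := hm.sub mz_t
      have mG2 : MemLp (fun ω => ((2:ℝ)^n*h₀) • (s (zhat i ω) t (2^n*h₀)
          - s (z t ω) t (2^n*h₀))) 2 P := (ms_zhat.sub ms_z).const_smul ((2:ℝ)^n*h₀)
      have mG3 : MemLp (fun ω => -(z (t + 2^n*h₀) ω - z t ω
          - ((2:ℝ)^n*h₀) • s (z t ω) t (2^n*h₀))) 2 P :=
        ((mz_t1.sub mz_t).sub (ms_z.const_smul ((2:ℝ)^n*h₀))).neg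
      have hdec : (fun ω => zhat (i+1) ω - z (((i+1:ℕ):ℝ)*(2^n*h₀)) ω)
          = (fun ω => ((zhat i ω - z t ω)
              + ((2:ℝ)^n*h₀) • (s (zhat i ω) t (2^n*h₀) - s (z t ω) t (2^n*h₀)))
              + -(z (t + 2^n*h₀) ω - z t ω - ((2:ℝ)^n*h₀) • s (z t ω) t (2^n*h₀))) := by
        funext ω
        rw [hstep, e5]
        module
      rw [hdec]
      have tri1 : L2norm P (fun ω => ((zhat i ω - z t ω)
              + ((2:ℝ)^n*h₀) • (s (zhat i ω) t (2^n*h₀) - s (z t ω) t (2^n*h₀)))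
              + -(z (t + 2^n*h₀) ω - z t ω - ((2:ℝ)^n*h₀) • s (z t ω) t (2^n*h₀)))
          ≤ L2norm P (fun ω => (zhat i ω - z t ω)
              + ((2:ℝ)^n*h₀) • (s (zhat i ω) t (2^n*h₀) - s (z t ω) t (2^n*h₀)))
            + L2norm P (fun ω => -(z (t + 2^n*h₀) ω - z t ω
              - ((2:ℝ)^n*h₀) • s (z t ω) t (2^n*h₀))) :=
        L2norm_add_le (mG1.add mG2) mG3
      have tri2 := L2norm_add_le mG1 mG2
      have b2 : L2norm P (fun ω => ((2:ℝ)^n*h₀) • (s (zhat i ω) t (2^n*h₀)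
            - s (z t ω) t (2^n*h₀)))
          ≤ 2^n*h₀ * L * L2norm P (fun ω => zhat i ω - z t ω) := by
        apply L2norm_le_smul (by positivity) mG2.1 mG1
        intro ω
        rw [norm_smul, Real.norm_eq_abs, abs_of_nonneg (by positivity : (0:ℝ) ≤ 2^n*h₀)]
        exact le_trans (mul_le_mul_of_nonneg_left
          (hsLip t htmem n hn (zhat i ω) (z t ω)) (by positivity))
          (le_of_eq (by ring))
      have b3 : L2norm P (fun ω => -(z (t + 2^n*h₀) ω - z t ω
            - ((2:ℝ)^n*h₀) • s (z t ω) t (2^n*h₀)))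
          ≤ (2^n*h₀) * Real.exp (L * (2^n*h₀) / 2) * (B₀ + n * ε_SC) := by
        have hcg : L2norm P (fun ω => -(z (t + 2^n*h₀) ω - z t ω
              - ((2:ℝ)^n*h₀) • s (z t ω) t (2^n*h₀)))
            = L2norm P (fun ω => z (t + 2^n*h₀) ω - z t ω
              - ((2:ℝ)^n*h₀) • s (z t ω) t (2^n*h₀)) :=
          L2norm_congr (fun ω => norm_neg _)
        rw [hcg, htdef]
        exact local_err n hn i hgrid
      have hnum := numGlob i (2^n*h₀) L (Real.exp (L*(2^n*h₀)/2)) (B₀ + n * ε_SC)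
        (L2norm P (fun ω => zhat i ω - z t ω))
        ((2^n*h₀) * Real.exp (L * (2^n*h₀) / 2) * (B₀ + n * ε_SC))
        (by positivity) hL (by linarith) hCn he (le_of_eq (by ring))
      push_cast
      push_cast at hnum
      linarith [tri1, tri2, b2, b3, hnum]
  obtain ⟨_, hfin⟩ := glob (2^(K-n)) le_rfl
  have hone : ((2^(K-n):ℕ):ℝ)*(2^n*h₀) = 1 := by
    have hp : (2:ℝ)^(K-n)*(2:ℝ)^n = 2^K := by rw [← pow_add, Nat.sub_add_cancel hn]
    push_cast
    rw [← mul_assoc, hp, hKh₀]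
  rw [hone] at hfin
  exact hfin
end

section
/- Let L ≥ 0, ε ≥ 0, h₀ > 0, let n be a nonnegative integer, and let (A_k)_{0 ≤ k ≤ n} be nonnegative real numbers satisfying A_{k+1} ≤ (2 + L·h₀·2^k)·A_k + 2·ε·h₀·2^k for every 0 ≤ k < n. Then A_n ≤ 2ⁿ·h₀·exp((1/2)·L·h₀·2ⁿ)·(A₀/h₀ + n·ε). -/
/-- recursion bound `A_{k+1} ≤ (2 + L h₀ 2^k) A_k + 2 ε h₀ 2^k` implies
`A_n ≤ 2^n h₀ exp(L h₀ 2^n / 2) (A₀/h₀ + n ε)`. -/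
theorem stmt7 (L ε h₀ : ℝ) (hL : 0 ≤ L) (hε : 0 ≤ ε) (hh₀ : 0 < h₀)
    (n : ℕ) (A : ℕ → ℝ) (hA : ∀ k ≤ n, 0 ≤ A k)
    (hrec : ∀ k < n, A (k + 1) ≤ (2 + L * h₀ * 2 ^ k) * A k + 2 * ε * h₀ * 2 ^ k) :
    A n ≤ 2 ^ n * h₀ * Real.exp ((1 / 2) * L * h₀ * 2 ^ n) * (A 0 / h₀ + n * ε) := by
  have hA0 : 0 ≤ A 0 := hA 0 (Nat.zero_le n)
  have key : ∀ m : ℕ,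
      (∀ k < m, A (k + 1) ≤ (2 + L * h₀ * 2 ^ k) * A k + 2 * ε * h₀ * 2 ^ k) →
      A m ≤ 2 ^ m * h₀ * Real.exp ((1 / 2) * L * h₀ * (2 ^ m - 1)) * (A 0 / h₀ + m * ε) := by
    intro m
    induction m with
    | zero =>
        intro _
        simp only [pow_zero, Nat.cast_zero, zero_mul, add_zero, one_mul, sub_self, mul_zero,
          Real.exp_zero, mul_one]
        rw [mul_div_cancel₀ _ (ne_of_gt hh₀)]
    | succ m ih =>
        intro hr
        have IH := ih (fun k hk => hr k (Nat.lt_succ_of_lt hk))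
        set c := (1 / 2) * L * h₀ * 2 ^ m with hc
        have hc0 : 0 ≤ c := by positivity
        set Em := Real.exp ((1 / 2) * L * h₀ * (2 ^ m - 1)) with hEm
        have hEmpos : 0 < Em := Real.exp_pos _
        set S := A 0 / h₀ + (m : ℝ) * ε with hS
        have hSpos : 0 ≤ S := by positivity
        have hexp : Em * Real.exp c = Real.exp ((1 / 2) * L * h₀ * (2 ^ (m + 1) - 1)) := by
          rw [← Real.exp_add]
          congr 1
          rw [pow_succ]
          ring
        have h1 : 2 + 2 * c ≤ 2 * Real.exp c := by
          have := Real.add_one_le_exp c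
          linarith
        have hone : (1 : ℝ) ≤ Real.exp ((1 / 2) * L * h₀ * (2 ^ (m + 1) - 1)) := by
          apply Real.one_le_exp
          have h4 : (1 : ℝ) ≤ 2 ^ (m + 1) := one_le_pow₀ (by norm_num)
          have h5 : (0:ℝ) ≤ L * h₀ := mul_nonneg hL (le_of_lt hh₀)
          nlinarith
        calc A (m + 1) ≤ (2 + L * h₀ * 2 ^ m) * A m + 2 * ε * h₀ * 2 ^ m :=
              hr m (Nat.lt_succ_self m)
          _ ≤ (2 + L * h₀ * 2 ^ m) * (2 ^ m * h₀ * Em * S) + 2 * ε * h₀ * 2 ^ m := by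
              have := mul_le_mul_of_nonneg_left IH
                (show (0:ℝ) ≤ 2 + L * h₀ * 2 ^ m by positivity)
              linarith
          _ = 2 ^ m * h₀ * ((2 + 2 * c) * Em) * S + 2 * ε * h₀ * 2 ^ m := by
              rw [hc]; ring
          _ ≤ 2 ^ m * h₀ * (2 * Real.exp c * Em) * S + 2 * ε * h₀ * 2 ^ m := by
              have : (2 + 2 * c) * Em ≤ 2 * Real.exp c * Em := by
                apply mul_le_mul_of_nonneg_right h1 (le_of_lt hEmpos)
              gcongr
          _ = 2 ^ (m + 1) * h₀ * Real.exp ((1 / 2) * L * h₀ * (2 ^ (m + 1) - 1)) * S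
                + 2 ^ (m + 1) * h₀ * ε := by
              rw [← hexp, pow_succ]; ring
          _ ≤ 2 ^ (m + 1) * h₀ * Real.exp ((1 / 2) * L * h₀ * (2 ^ (m + 1) - 1)) * S
                + 2 ^ (m + 1) * h₀ * Real.exp ((1 / 2) * L * h₀ * (2 ^ (m + 1) - 1)) * ε := by
              have h2 : (2:ℝ) ^ (m + 1) * h₀ * ε ≤
                  2 ^ (m + 1) * h₀ * Real.exp ((1 / 2) * L * h₀ * (2 ^ (m + 1) - 1)) * ε := by
                have h3 := mul_le_mul_of_nonneg_left hone
                  (show (0:ℝ) ≤ 2 ^ (m + 1) * h₀ * ε by positivity)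
                nlinarith [h3]
              linarith
          _ = 2 ^ (m + 1) * h₀ * Real.exp ((1 / 2) * L * h₀ * (2 ^ (m + 1) - 1)) *
                (A 0 / h₀ + (↑(m + 1) : ℝ) * ε) := by
              rw [hS]; push_cast; ring
  have hkey := key n hrec
  have hmono : Real.exp ((1 / 2) * L * h₀ * (2 ^ n - 1)) ≤
      Real.exp ((1 / 2) * L * h₀ * 2 ^ n) := by
    apply Real.exp_le_exp.mpr
    have h2 : (2:ℝ) ^ n - 1 ≤ 2 ^ n := by linarith
    nlinarith [pow_pos (show (0:ℝ) < 2 by norm_num) n]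
  have hSpos : 0 ≤ A 0 / h₀ + (n : ℝ) * ε := by positivity
  calc A n ≤ 2 ^ n * h₀ * Real.exp ((1 / 2) * L * h₀ * (2 ^ n - 1)) * (A 0 / h₀ + n * ε) := hkey
    _ ≤ 2 ^ n * h₀ * Real.exp ((1 / 2) * L * h₀ * 2 ^ n) * (A 0 / h₀ + n * ε) := by gcongr
end

section
/- Suppose: (i) there is L > 0 such that for every t ∈ [0,1] and every dyadic step size h', the map x ↦ s(x, t, h') is L-Lipschitz; (ii) there is L_v ≥ 0 such that for every t ∈ [0,1] the map x ↦ v(t, x) is L_v-Lipschitz and for every x ∈ ℝ^d the map t ↦ v(t, x) is L_v-Lipschitz; (iii) there is M_v ≥ 0 with ‖v(t, z_t)‖_{L²} ≤ M_v for every t ∈ {0, h₀, 2h₀, …, 1 − h₀}; (iv) flow-matching error: ‖s(z_t, t, h₀) − v(t, z_t)‖_{L²} ≤ ε_FM for every t ∈ {0, h₀, 2h₀, …, 1 − h₀}; (v) self-consistency error: for every dyadic step size h' ≤ 1/2 and every t ∈ {0, h', 2h', …, 1 − 2h'}, ‖s(z_t, t, h')/2 + s(z_t + h'·s(z_t, t,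 h'), t + h', h')/2 − s(z_t, t, 2h')‖_{L²} ≤ ε_SC. Then for every dyadic step size h = 2ⁿ·h₀ and every t ∈ {0, h, 2h, …, 1 − h}, the single shortcut step of size h satisfies ‖z_t + h·s(z_t, t, h) − z_{t+h}‖_{L²} ≤ h·exp(L·h/2)·(L_v·e^{L_v·h₀}·h₀·(M_v + 1) + ε_FM + n·ε_SC). -/
open MeasureTheory Set

open scoped ENNReal

namespace Stmt12Aux
variable {Ω : Type*} [MeasurableSpace Ω] {P : Measure Ω} {d : ℕ}

lemma l2_nonneg (X : Ω → EuclideanSpace ℝ (Fin d)) : 0 ≤ L2norm P X := Real.sqrt_nonneg _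

lemma l2_eq {X : Ω → EuclideanSpace ℝ (Fin d)} (hX : MemLp X 2 P) :
    L2norm P X = (eLpNorm X 2 P).toReal := by
  rw [hX.eLpNorm_eq_integral_rpow_norm two_ne_zero ENNReal.ofNat_ne_top,
    ENNReal.toReal_ofReal (by positivity)]
  have h2 : (2 : ℝ≥0∞).toReal = 2 := by simp
  rw [L2norm, h2, Real.sqrt_eq_rpow]
  have : ∀ ω : Ω, ‖X ω‖ ^ (2 : ℝ) = ‖X ω‖ ^ (2 : ℕ) := fun ω => by
    rw [← Real.rpow_natCast]; norm_num
  simp only [this]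
  norm_num

lemma l2_add {X Y : Ω → EuclideanSpace ℝ (Fin d)} (hX : MemLp X 2 P) (hY : MemLp Y 2 P) :
    L2norm P (fun ω => X ω + Y ω) ≤ L2norm P X + L2norm P Y := by
  rw [show (fun ω => X ω + Y ω) = X + Y from rfl, l2_eq (hX.add hY), l2_eq hX, l2_eq hY,
    ← ENNReal.toReal_add hX.2.ne hY.2.ne]
  exact ENNReal.toReal_mono (ENNReal.add_ne_top.2 ⟨hX.2.ne, hY.2.ne⟩)
    (eLpNorm_add_le hX.1 hY.1 one_le_two)

lemma l2_smul (c : ℝ) (X : Ω → EuclideanSpace ℝ (Fin d)) :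
    L2norm P (fun ω => c • X ω) = |c| * L2norm P X := by
  unfold L2norm
  have h : ∀ ω, ‖c • X ω‖ ^ 2 = c ^ 2 * ‖X ω‖ ^ 2 := by
    intro ω; rw [norm_smul]; simp [mul_pow, Real.norm_eq_abs, sq_abs]
  simp only [h, integral_const_mul]
  rw [Real.sqrt_mul (sq_nonneg c), Real.sqrt_sq_eq_abs]

lemma l2_mono {X Y : Ω → EuclideanSpace ℝ (Fin d)} (hX : AEStronglyMeasurable X P)
    (hY : MemLp Y 2 P) (h : ∀ ω, ‖X ω‖ ≤ ‖Y ω‖) : L2norm P X ≤ L2norm P Y := by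
  have hXm : MemLp X 2 P := hY.of_le hX (ae_of_all _ h)
  rw [l2_eq hXm, l2_eq hY]
  exact ENNReal.toReal_mono hY.2.ne (eLpNorm_mono_ae (ae_of_all _ h))

lemma l2_bound [IsProbabilityMeasure P] {X V : Ω → EuclideanSpace ℝ (Fin d)}
    (hX : AEStronglyMeasurable X P)
    (hV : MemLp V 2 P) {a b : ℝ} (ha : 0 ≤ a) (hb : 0 ≤ b)
    (h : ∀ ω, ‖X ω‖ ≤ a + b * ‖V ω‖) : L2norm P X ≤ a + b * L2norm P V := by
  set g : Ω → ℝ := fun ω => a + b * ‖V ω‖ with hg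
  have hgm : MemLp g 2 P := (memLp_const a).add ((hV.norm).const_mul b)
  have hXg : ∀ ω, ‖X ω‖ ≤ ‖g ω‖ := fun ω => (h ω).trans (le_abs_self _)
  have hXm : MemLp X 2 P := hgm.of_le hX (ae_of_all _ hXg)
  rw [l2_eq hXm, l2_eq hV]
  have h1 : eLpNorm X 2 P ≤ eLpNorm g 2 P := eLpNorm_mono_ae (ae_of_all _ hXg)
  have h2 : eLpNorm g 2 P ≤ ENNReal.ofReal a + ENNReal.ofReal b * eLpNorm V 2 P := by
    have ht : eLpNorm g 2 P ≤
        eLpNorm (fun _ : Ω => a) 2 P + eLpNorm (fun ω => b * ‖V ω‖) 2 P :=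
      eLpNorm_add_le aestronglyMeasurable_const ((hV.norm).const_mul b).1 one_le_two
    have hca : eLpNorm (fun _ : Ω => a) 2 P = ENNReal.ofReal a := by
      rw [eLpNorm_const a two_ne_zero (IsProbabilityMeasure.ne_zero P)]
      simp [Real.enorm_eq_ofReal ha]
    have hcb : eLpNorm (fun ω => b * ‖V ω‖) 2 P = ENNReal.ofReal b * eLpNorm V 2 P := by
      rw [show (fun ω => b * ‖V ω‖) = (b • fun ω => ‖V ω‖) from rfl, eLpNorm_const_smul,
        eLpNorm_norm]
      congr 1
      simp [Real.enorm_eq_ofReal hb]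
    rw [hca, hcb] at ht
    exact ht
  calc (eLpNorm X 2 P).toReal ≤ (ENNReal.ofReal a + ENNReal.ofReal b * eLpNorm V 2 P).toReal := by
        exact ENNReal.toReal_mono (ENNReal.add_ne_top.2
          ⟨ENNReal.ofReal_ne_top, ENNReal.mul_ne_top ENNReal.ofReal_ne_top hV.2.ne⟩)
          (h1.trans h2)
    _ = a + b * (eLpNorm V 2 P).toReal := by
        rw [ENNReal.toReal_add ENNReal.ofReal_ne_top (ENNReal.mul_ne_top ENNReal.ofReal_ne_top hV.2.ne), ENNReal.toReal_mul,
          ENNReal.toReal_ofReal ha, ENNReal.toReal_ofReal hb]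

lemma memLp_comp [IsProbabilityMeasure P] {X : Ω → EuclideanSpace ℝ (Fin d)} (hX : MemLp X 2 P)
    {f : EuclideanSpace ℝ (Fin d) → EuclideanSpace ℝ (Fin d)} {c : ℝ} (hc : 0 ≤ c)
    (hf : ∀ x y, ‖f x - f y‖ ≤ c * ‖x - y‖) : MemLp (fun ω => f (X ω)) 2 P := by
  have hlip : LipschitzWith c.toNNReal f := by
    apply LipschitzWith.of_dist_le_mul
    intro x y
    rw [dist_eq_norm, dist_eq_norm]
    simpa [Real.coe_toNNReal c hc] using hf x y
  have haes : AEStronglyMeasurable (fun ω => f (X ω)) P :=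
    hlip.continuous.comp_aestronglyMeasurable hX.1
  have hgm : MemLp (fun ω => ‖f 0‖ + c * ‖X ω‖) 2 P :=
    (memLp_const ‖f 0‖).add ((hX.norm).const_mul c)
  refine hgm.of_le haes (ae_of_all _ fun ω => ?_)
  have h1 : ‖f (X ω)‖ ≤ ‖f 0‖ + c * ‖X ω‖ := by
    have := hf (X ω) 0
    simp only [sub_zero] at this
    calc ‖f (X ω)‖ ≤ ‖f (X ω) - f 0‖ + ‖f 0‖ := by simpa using norm_add_le (f (X ω) - f 0) (f 0)
      _ ≤ c * ‖X ω‖ + ‖f 0‖ := by linarith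
      _ = ‖f 0‖ + c * ‖X ω‖ := by ring
  exact h1.trans (le_abs_self _)

lemma gron_aux {Kc x eps : ℝ} (hK : 0 ≤ Kc) (hx : 0 ≤ x) (heps : 0 ≤ eps) :
    gronwallBound 0 Kc eps x ≤ eps * x * Real.exp (Kc * x) := by
  rcases eq_or_lt_of_le hK with h0 | h0
  · rw [← h0, gronwallBound_K0]
    simp only [zero_add, zero_mul]
    nlinarith [Real.one_le_exp (le_refl (0:ℝ)), Real.exp_pos (0:ℝ), Real.one_le_exp (mul_nonneg hK hx), mul_nonneg heps hx]
  · rw [gronwallBound_of_K_ne_0 h0.ne']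
    simp only [zero_mul, zero_add]
    have key : Real.exp (Kc * x) - 1 ≤ Kc * x * Real.exp (Kc * x) := by
      have h1 : 1 - Kc * x ≤ Real.exp (-(Kc * x)) := by
        have := Real.add_one_le_exp (-(Kc * x)); linarith
      have h2 := Real.exp_pos (Kc * x)
      have h3 : Real.exp (-(Kc*x)) * Real.exp (Kc*x) = 1 := by
        rw [← Real.exp_add]; simp
      nlinarith
    have h4 : eps / Kc ≥ 0 := div_nonneg heps hK
    calc eps / Kc * (Real.exp (Kc * x) - 1) ≤ eps / Kc * (Kc * x * Real.exp (Kc * x)) := by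
          exact mul_le_mul_of_nonneg_left key h4
      _ = eps * x * Real.exp (Kc * x) := by field_simp

lemma ode_step {d : ℕ} {v : ℝ → EuclideanSpace ℝ (Fin d) → EuclideanSpace ℝ (Fin d)}
    {zω : ℝ → EuclideanSpace ℝ (Fin d)} {L_v t h : ℝ}
    (hder : ∀ τ ∈ Icc (0:ℝ) 1, HasDerivWithinAt zω (v τ (zω τ)) (Icc (0:ℝ) 1) τ)
    (ht : 0 ≤ t) (hh : 0 < h) (hth : t + h ≤ 1) (hLv : 0 ≤ L_v)
    (hvLipx : ∀ t ∈ Icc (0:ℝ) 1, ∀ x y, ‖v t x - v t y‖ ≤ L_v * ‖x - y‖)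
    (hvLipt : ∀ x, ∀ t ∈ Icc (0:ℝ) 1, ∀ t'' ∈ Icc (0:ℝ) 1,
      ‖v t x - v t'' x‖ ≤ L_v * |t - t''|) :
    ‖zω (t+h) - zω t - h • v t (zω t)‖ ≤
      L_v * h^2 * Real.exp (L_v * h) * (1 + ‖v t (zω t)‖) := by
  set c := v t (zω t) with hc
  set f : ℝ → EuclideanSpace ℝ (Fin d) := fun τ => zω τ - zω t - (τ - t) • c with hf
  have hsub : Icc t (t+h) ⊆ Icc (0:ℝ) 1 := Icc_subset_Icc (by linarith) (by linarith)
  have hcont : ContinuousOn f (Icc t (t+h)) := by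
    have h1 : ContinuousOn zω (Icc (0:ℝ) 1) := fun τ hτ => (hder τ hτ).continuousWithinAt
    exact ((h1.mono hsub).sub continuousOn_const).sub
      ((continuousOn_id.sub continuousOn_const).smul continuousOn_const)
  have hfd : ∀ τ ∈ Ico t (t+h), HasDerivWithinAt f (v τ (zω τ) - c) (Ici τ) τ := by
    intro τ hτ
    have hτI : τ ∈ Icc (0:ℝ) 1 := ⟨le_trans ht hτ.1, le_of_lt (lt_of_lt_of_le hτ.2 hth)⟩
    have hmem : Icc (0:ℝ) 1 ∈ nhdsWithin τ (Ici τ) :=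
      Icc_mem_nhdsGE_of_mem ⟨hτI.1, lt_of_lt_of_le hτ.2 hth⟩
    have hz : HasDerivWithinAt zω (v τ (zω τ)) (Ici τ) τ := (hder τ hτI).mono_of_mem_nhdsWithin hmem
    have haff : HasDerivWithinAt (fun τ' : ℝ => (τ' - t) • c) c (Ici τ) τ := by
      simpa using ((hasDerivWithinAt_id τ (Ici τ)).sub_const t).smul_const c
    exact (hz.sub_const (zω t)).sub haff
  have bound : ∀ τ ∈ Ico t (t+h),
      ‖v τ (zω τ) - c‖ ≤ L_v * ‖f τ‖ + L_v * h * (1 + ‖c‖) := by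
    intro τ hτ
    have hτI : τ ∈ Icc (0:ℝ) 1 := ⟨le_trans ht hτ.1, le_of_lt (lt_of_lt_of_le hτ.2 hth)⟩
    have htI : t ∈ Icc (0:ℝ) 1 := ⟨ht, by linarith⟩
    have h1 : ‖v τ (zω τ) - v τ (zω t)‖ ≤ L_v * ‖zω τ - zω t‖ := hvLipx τ hτI _ _
    have h2 : ‖v τ (zω t) - v t (zω t)‖ ≤ L_v * |τ - t| := hvLipt _ τ hτI t htI
    have h3 : ‖zω τ - zω t‖ ≤ ‖f τ‖ + (τ - t) * ‖c‖ := by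
      have heq : zω τ - zω t = f τ + (τ - t) • c := by rw [hf]; module
      rw [heq]
      refine (norm_add_le _ _).trans ?_
      rw [norm_smul, Real.norm_eq_abs, abs_of_nonneg (by linarith [hτ.1])]
    have habs : |τ - t| ≤ h := by
      rw [abs_of_nonneg (by linarith [hτ.1])]; linarith [hτ.2]
    calc ‖v τ (zω τ) - c‖ ≤ ‖v τ (zω τ) - v τ (zω t)‖ + ‖v τ (zω t) - v t (zω t)‖ := by
          simpa using norm_add_le (v τ (zω τ) - v τ (zω t)) (v τ (zω t) - v t (zω t))
      _ ≤ L_v * (‖f τ‖ + (τ - t) * ‖c‖) + L_v * |τ - t| := by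
          have := mul_le_mul_of_nonneg_left h3 hLv; linarith
      _ ≤ L_v * ‖f τ‖ + L_v * h * (1 + ‖c‖) := by
          have h5 : τ - t ≤ h := by linarith [hτ.2]
          have h6 := mul_le_mul_of_nonneg_left habs hLv
          have h7 := mul_le_mul_of_nonneg_left
            (mul_le_mul_of_nonneg_right h5 (norm_nonneg c)) hLv
          linarith
  have hfa : ‖f t‖ ≤ 0 := by simp [hf]
  have hgron := norm_le_gronwallBound_of_norm_deriv_right_le hcont hfd hfa bound (t+h)
    (right_mem_Icc.2 (by linarith))
  have heq2 : f (t+h) = zω (t+h) - zω t - h • c := by simp [hf]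
  have hend : ‖zω (t+h) - zω t - h • c‖ ≤ gronwallBound 0 L_v (L_v * h * (1 + ‖c‖)) h := by
    rw [← heq2]
    simpa using hgron
  refine hend.trans ?_
  have heps : 0 ≤ L_v * h * (1 + ‖c‖) := by positivity
  refine (gron_aux hLv hh.le heps).trans ?_
  have : L_v * h * (1 + ‖c‖) * h * Real.exp (L_v * h)
      = L_v * h^2 * Real.exp (L_v * h) * (1 + ‖c‖) := by ring
  rw [this]

lemma l2_add4 {A B C D : Ω → EuclideanSpace ℝ (Fin d)} (hA : MemLp A 2 P) (hB : MemLp B 2 P)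
    (hC : MemLp C 2 P) (hD : MemLp D 2 P) :
    L2norm P (fun ω => A ω + B ω + C ω + D ω) ≤
      L2norm P A + L2norm P B + L2norm P C + L2norm P D := by
  calc L2norm P (fun ω => A ω + B ω + C ω + D ω)
      ≤ L2norm P (fun ω => A ω + B ω + C ω) + L2norm P D :=
        l2_add ((hA.add hB).add hC) hD
    _ ≤ (L2norm P (fun ω => A ω + B ω) + L2norm P C) + L2norm P D := by
        have := l2_add (X := fun ω => A ω + B ω) (Y := C) (hA.add hB) hC
        linarith
    _ ≤ L2norm P A + L2norm P B + L2norm P C + L2norm P D := by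
        have := l2_add (X := A) (Y := B) hA hB
        linarith

/-- The key recursion step. -/
lemma key_step [IsProbabilityMeasure P]
    {zT zTM zTE : Ω → EuclideanSpace ℝ (Fin d)}
    (sf sg sb : EuclideanSpace ℝ (Fin d) → EuclideanSpace ℝ (Fin d))
    {hh L εSC BA BB : ℝ} (hhh : 0 < hh) (hL : 0 < L)
    (hzT : MemLp zT 2 P) (hzTM : MemLp zTM 2 P) (hzTE : MemLp zTE 2 P)
    (hfLip : ∀ x y, ‖sf x - sf y‖ ≤ L * ‖x - y‖)
    (hgLip : ∀ x y, ‖sg x - sg y‖ ≤ L * ‖x - y‖)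
    (hbLip : ∀ x y, ‖sb x - sb y‖ ≤ L * ‖x - y‖)
    (hA : L2norm P (fun ω => zT ω + hh • sf (zT ω) - zTM ω) ≤ BA)
    (hB : L2norm P (fun ω => zTM ω + hh • sg (zTM ω) - zTE ω) ≤ BB)
    (hsc : L2norm P (fun ω => (1/2 : ℝ) • sf (zT ω)
        + (1/2 : ℝ) • sg (zT ω + hh • sf (zT ω)) - sb (zT ω)) ≤ εSC) :
    L2norm P (fun ω => zT ω + (2 * hh) • sb (zT ω) - zTE ω) ≤
      (1 + hh * L) * BA + BB + 2 * hh * εSC := by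
  have hsfm : MemLp (fun ω => sf (zT ω)) 2 P := memLp_comp hzT hL.le hfLip
  have hy : MemLp (fun ω => zT ω + hh • sf (zT ω)) 2 P := by
    exact hzT.add (hsfm.const_smul hh)
  have hsym : MemLp (fun ω => sg (zT ω + hh • sf (zT ω))) 2 P := memLp_comp hy hL.le hgLip
  have hsgm : MemLp (fun ω => sg (zTM ω)) 2 P := memLp_comp hzTM hL.le hgLip
  have hsbm : MemLp (fun ω => sb (zT ω)) 2 P := memLp_comp hzT hL.le hbLip
  have hAm : MemLp (fun ω => zT ω + hh • sf (zT ω) - zTM ω) 2 P := hy.sub hzTM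
  have hBm : MemLp (fun ω => zTM ω + hh • sg (zTM ω) - zTE ω) 2 P :=
    (hzTM.add (hsgm.const_smul hh)).sub hzTE
  have hCm : MemLp (fun ω => (-(2*hh)) • ((1/2 : ℝ) • sf (zT ω)
      + (1/2 : ℝ) • sg (zT ω + hh • sf (zT ω)) - sb (zT ω))) 2 P :=
    (((hsfm.const_smul (1/2 : ℝ)).add (hsym.const_smul (1/2 : ℝ))).sub hsbm).const_smul (-(2*hh))
  have hDm : MemLp (fun ω => hh • (sg (zT ω + hh • sf (zT ω)) - sg (zTM ω))) 2 P :=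
    (hsym.sub hsgm).const_smul hh
  have hid : (fun ω => zT ω + (2 * hh) • sb (zT ω) - zTE ω)
      = fun ω => (fun ω' => zT ω' + hh • sf (zT ω') - zTM ω') ω
        + (fun ω' => zTM ω' + hh • sg (zTM ω') - zTE ω') ω
        + (fun ω' => (-(2*hh)) • ((1/2 : ℝ) • sf (zT ω')
            + (1/2 : ℝ) • sg (zT ω' + hh • sf (zT ω')) - sb (zT ω'))) ω
        + (fun ω' => hh • (sg (zT ω' + hh • sf (zT ω')) - sg (zTM ω'))) ω := by
    funext ω
    simp only
    module
  have hC2 : L2norm P (fun ω => (-(2*hh)) • ((1/2 : ℝ) • sf (zT ω)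
      + (1/2 : ℝ) • sg (zT ω + hh • sf (zT ω)) - sb (zT ω))) ≤ 2 * hh * εSC := by
    rw [l2_smul]
    rw [abs_of_nonpos (by linarith)]
    calc (-(-(2*hh))) * L2norm P _ = (2*hh) * L2norm P _ := by ring_nf
      _ ≤ 2 * hh * εSC := by
          apply mul_le_mul_of_nonneg_left hsc (by linarith)
  have hD2 : L2norm P (fun ω => hh • (sg (zT ω + hh • sf (zT ω)) - sg (zTM ω)))
      ≤ hh * L * BA := by
    have hmono : L2norm P (fun ω => hh • (sg (zT ω + hh • sf (zT ω)) - sg (zTM ω)))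
        ≤ L2norm P (fun ω => (hh * L) • (zT ω + hh • sf (zT ω) - zTM ω)) := by
      refine l2_mono hDm.1 (by exact hAm.const_smul (hh * L)) (fun ω => ?_)
      rw [norm_smul, norm_smul, Real.norm_eq_abs, Real.norm_eq_abs,
        abs_of_nonneg hhh.le, abs_of_nonneg (by positivity)]
      have h1 := hgLip (zT ω + hh • sf (zT ω)) (zTM ω)
      calc hh * ‖sg (zT ω + hh • sf (zT ω)) - sg (zTM ω)‖
          ≤ hh * (L * ‖zT ω + hh • sf (zT ω) - zTM ω‖) :=
            mul_le_mul_of_nonneg_left h1 hhh.le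
        _ = hh * L * ‖zT ω + hh • sf (zT ω) - zTM ω‖ := by ring
    refine hmono.trans ?_
    rw [l2_smul, abs_of_nonneg (by positivity)]
    exact mul_le_mul_of_nonneg_left hA (by positivity)
  calc L2norm P (fun ω => zT ω + (2 * hh) • sb (zT ω) - zTE ω)
      = L2norm P _ := by rw [hid]
    _ ≤ L2norm P (fun ω => zT ω + hh • sf (zT ω) - zTM ω)
        + L2norm P (fun ω => zTM ω + hh • sg (zTM ω) - zTE ω)
        + L2norm P (fun ω => (-(2*hh)) • ((1/2 : ℝ) • sf (zT ω)
            + (1/2 : ℝ) • sg (zT ω + hh • sf (zT ω)) - sb (zT ω)))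
        + L2norm P (fun ω => hh • (sg (zT ω + hh • sf (zT ω)) - sg (zTM ω))) :=
        l2_add4 hAm hBm hCm hDm
    _ ≤ BA + BB + 2 * hh * εSC + hh * L * BA := by
        have := hC2; have := hD2; linarith
    _ = (1 + hh * L) * BA + BB + 2 * hh * εSC := by ring

end Stmt12Aux

set_option maxHeartbeats 1000000 in
open Stmt12Aux in
/-- under the Lipschitz, flow-matching and self-consistency hypotheses, a
single shortcut step of any dyadic size `h = 2^n h₀` satisfies
`‖z_t + h s(z_t,t,h) − z_{t+h}‖_{L²} ≤ h e^{Lh/2} (L_v e^{L_v h₀} h₀ (M_v+1) + ε_FM + n ε_SC)`. -/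
theorem stmt12 {d : ℕ} (hd : 1 ≤ d) {Ω : Type*} [MeasurableSpace Ω]
    (P : Measure Ω) [IsProbabilityMeasure P]
    (K : ℕ) (hK : 1 ≤ K) (h₀ : ℝ) (hh₀ : h₀ = 1 / 2 ^ K)
    (v : ℝ → EuclideanSpace ℝ (Fin d) → EuclideanSpace ℝ (Fin d))
    (z : ℝ → Ω → EuclideanSpace ℝ (Fin d))
    (hzode : ∀ ω, ∀ t ∈ Icc (0 : ℝ) 1,
      HasDerivWithinAt (fun τ => z τ ω) (v t (z t ω)) (Icc (0 : ℝ) 1) t)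
    (hzmem : ∀ t ∈ Icc (0 : ℝ) 1, MemLp (z t) 2 P)
    (s : EuclideanSpace ℝ (Fin d) → ℝ → ℝ → EuclideanSpace ℝ (Fin d))
    (L : ℝ) (hL : 0 < L)
    (hsLip : ∀ t ∈ Icc (0 : ℝ) 1, ∀ k ≤ K, ∀ x y : EuclideanSpace ℝ (Fin d),
      ‖s x t (2 ^ k * h₀) - s y t (2 ^ k * h₀)‖ ≤ L * ‖x - y‖)
    (L_v : ℝ) (hLv : 0 ≤ L_v)
    (hvLipx : ∀ t ∈ Icc (0 : ℝ) 1, ∀ x y : EuclideanSpace ℝ (Fin d),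
      ‖v t x - v t y‖ ≤ L_v * ‖x - y‖)
    (hvLipt : ∀ x : EuclideanSpace ℝ (Fin d), ∀ t ∈ Icc (0 : ℝ) 1, ∀ t'' ∈ Icc (0 : ℝ) 1,
      ‖v t x - v t'' x‖ ≤ L_v * |t - t''|)
    (M_v : ℝ) (hMv : 0 ≤ M_v)
    (hMvB : ∀ i : ℕ, i < 2 ^ K →
      L2norm P (fun ω => v (i * h₀) (z (i * h₀) ω)) ≤ M_v)
    (ε_FM : ℝ)
    (hFM : ∀ i : ℕ, i < 2 ^ K →
      L2norm P (fun ω =>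
        s (z (i * h₀) ω) (i * h₀) h₀ - v (i * h₀) (z (i * h₀) ω)) ≤ ε_FM)
    (ε_SC : ℝ)
    (hSC : ∀ k : ℕ, k + 1 ≤ K → ∀ i : ℕ, (i + 2) * 2 ^ k ≤ 2 ^ K →
      L2norm P (fun ω =>
        (1 / 2 : ℝ) • s (z (i * (2 ^ k * h₀)) ω) (i * (2 ^ k * h₀)) (2 ^ k * h₀)
        + (1 / 2 : ℝ) • s (z (i * (2 ^ k * h₀)) ω
              + (2 ^ k * h₀) • s (z (i * (2 ^ k * h₀)) ω) (i * (2 ^ k * h₀)) (2 ^ k * h₀))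
            (i * (2 ^ k * h₀) + 2 ^ k * h₀) (2 ^ k * h₀)
        - s (z (i * (2 ^ k * h₀)) ω) (i * (2 ^ k * h₀)) (2 * (2 ^ k * h₀))) ≤ ε_SC) :
    ∀ n ≤ K, ∀ i : ℕ, (i + 1) * 2 ^ n ≤ 2 ^ K →
      L2norm P (fun ω =>
        z (i * (2 ^ n * h₀)) ω
          + (2 ^ n * h₀) • s (z (i * (2 ^ n * h₀)) ω) (i * (2 ^ n * h₀)) (2 ^ n * h₀)
          - z ((i + 1 : ℕ) * (2 ^ n * h₀)) ω)
        ≤ (2 ^ n * h₀) * Real.exp (L * (2 ^ n * h₀) / 2)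
          * (L_v * Real.exp (L_v * h₀) * h₀ * (M_v + 1) + ε_FM + n * ε_SC) := by
  
  have hh0 : 0 < h₀ := by rw [hh₀]; positivity
  have hKh : (2:ℝ) ^ K * h₀ = 1 := by rw [hh₀]; field_simp
  have tmem : ∀ j : ℕ, j ≤ 2 ^ K → (j : ℝ) * h₀ ∈ Icc (0:ℝ) 1 := by
    intro j hj
    constructor
    · positivity
    · have h1 : (j : ℝ) ≤ (2:ℝ) ^ K := by exact_mod_cast hj
      calc (j : ℝ) * h₀ ≤ (2:ℝ) ^ K * h₀ := mul_le_mul_of_nonneg_right h1 hh0.le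
        _ = 1 := hKh
  have εFM0 : 0 ≤ ε_FM := (l2_nonneg _).trans (hFM 0 (Nat.pow_pos (by norm_num)))
  have εSC0 : 0 ≤ ε_SC := by
    refine (l2_nonneg _).trans (hSC 0 hK 0 ?_)
    have : 2 ^ 1 ≤ 2 ^ K := Nat.pow_le_pow_right (by norm_num) hK
    simpa using this
  intro n
  induction n with
  | zero =>
    intro _ i hi
    simp only [pow_zero, one_mul, Nat.cast_zero, zero_mul, add_zero]
    have hiK : i + 1 ≤ 2 ^ K := by simpa using hi
    have hiltK : i < 2 ^ K := lt_of_lt_of_le (Nat.lt_succ_self i) hiK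
    have eEnd : ((i + 1 : ℕ) : ℝ) * h₀ = (i : ℝ) * h₀ + h₀ := by push_cast; ring
    rw [eEnd]
    have htI : (i : ℝ) * h₀ ∈ Icc (0:ℝ) 1 := tmem i hiltK.le
    have ht2I : (i : ℝ) * h₀ + h₀ ∈ Icc (0:ℝ) 1 := by rw [← eEnd]; exact tmem (i+1) hiK
    have hzt : MemLp (z ((i : ℝ) * h₀)) 2 P := hzmem _ htI
    have hzt2 : MemLp (z ((i : ℝ) * h₀ + h₀)) 2 P := hzmem _ ht2I
    have hV : MemLp (fun ω => v ((i : ℝ) * h₀) (z ((i : ℝ) * h₀) ω)) 2 P :=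
      memLp_comp hzt hLv (hvLipx _ htI)
    have hS : MemLp (fun ω => s (z ((i : ℝ) * h₀) ω) ((i : ℝ) * h₀) h₀) 2 P :=
      memLp_comp hzt hL.le (fun x y => by simpa using hsLip _ htI 0 (Nat.zero_le K) x y)
    have hD : MemLp (fun ω => h₀ • (s (z ((i : ℝ) * h₀) ω) ((i : ℝ) * h₀) h₀
        - v ((i : ℝ) * h₀) (z ((i : ℝ) * h₀) ω))) 2 P := (hS.sub hV).const_smul h₀
    have hG : MemLp (fun ω => -(z ((i : ℝ) * h₀ + h₀) ω - z ((i : ℝ) * h₀) ω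
        - h₀ • v ((i : ℝ) * h₀) (z ((i : ℝ) * h₀) ω))) 2 P :=
      ((hzt2.sub hzt).sub (hV.const_smul h₀)).neg
    have hid : (fun ω => z ((i : ℝ) * h₀) ω
          + h₀ • s (z ((i : ℝ) * h₀) ω) ((i : ℝ) * h₀) h₀ - z ((i : ℝ) * h₀ + h₀) ω)
        = fun ω => (fun ω' => h₀ • (s (z ((i : ℝ) * h₀) ω') ((i : ℝ) * h₀) h₀
              - v ((i : ℝ) * h₀) (z ((i : ℝ) * h₀) ω'))) ω
          + (fun ω' => -(z ((i : ℝ) * h₀ + h₀) ω' - z ((i : ℝ) * h₀) ω'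
              - h₀ • v ((i : ℝ) * h₀) (z ((i : ℝ) * h₀) ω'))) ω := by
      funext ω
      simp only
      module
    set aa := L_v * h₀ ^ 2 * Real.exp (L_v * h₀) with haa
    have haa0 : 0 ≤ aa := by positivity
    have hGb : L2norm P (fun ω => -(z ((i : ℝ) * h₀ + h₀) ω - z ((i : ℝ) * h₀) ω
        - h₀ • v ((i : ℝ) * h₀) (z ((i : ℝ) * h₀) ω)))
        ≤ aa + aa * L2norm P (fun ω => v ((i : ℝ) * h₀) (z ((i : ℝ) * h₀) ω)) := by
      refine l2_bound hG.1 hV haa0 haa0 (fun ω => ?_)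
      have hode := ode_step (v := v) (zω := fun τ => z τ ω) (L_v := L_v)
        (t := (i : ℝ) * h₀) (h := h₀)
        (fun τ hτ => hzode ω τ hτ) htI.1 hh0 ht2I.2 hLv hvLipx hvLipt
      calc ‖-(z ((i : ℝ) * h₀ + h₀) ω - z ((i : ℝ) * h₀) ω
            - h₀ • v ((i : ℝ) * h₀) (z ((i : ℝ) * h₀) ω))‖
          = ‖z ((i : ℝ) * h₀ + h₀) ω - z ((i : ℝ) * h₀) ω
            - h₀ • v ((i : ℝ) * h₀) (z ((i : ℝ) * h₀) ω)‖ := norm_neg _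
        _ ≤ L_v * h₀ ^ 2 * Real.exp (L_v * h₀)
            * (1 + ‖v ((i : ℝ) * h₀) (z ((i : ℝ) * h₀) ω)‖) := hode
        _ = aa + aa * ‖v ((i : ℝ) * h₀) (z ((i : ℝ) * h₀) ω)‖ := by rw [haa]; ring
    have hGb2 : L2norm P (fun ω => -(z ((i : ℝ) * h₀ + h₀) ω - z ((i : ℝ) * h₀) ω
        - h₀ • v ((i : ℝ) * h₀) (z ((i : ℝ) * h₀) ω))) ≤ aa + aa * M_v := by
      refine hGb.trans ?_
      have := mul_le_mul_of_nonneg_left (hMvB i hiltK) haa0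
      linarith
    have hDb : L2norm P (fun ω => h₀ • (s (z ((i : ℝ) * h₀) ω) ((i : ℝ) * h₀) h₀
        - v ((i : ℝ) * h₀) (z ((i : ℝ) * h₀) ω))) ≤ h₀ * ε_FM := by
      rw [l2_smul, abs_of_nonneg hh0.le]
      exact mul_le_mul_of_nonneg_left (hFM i hiltK) hh0.le
    have htotal : L2norm P (fun ω => z ((i : ℝ) * h₀) ω
        + h₀ • s (z ((i : ℝ) * h₀) ω) ((i : ℝ) * h₀) h₀ - z ((i : ℝ) * h₀ + h₀) ω)
        ≤ h₀ * ε_FM + (aa + aa * M_v) := by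
      rw [hid]
      exact (l2_add hD hG).trans (add_le_add hDb hGb2)
    refine htotal.trans ?_
    have hE0 : 1 ≤ Real.exp (L * h₀ / 2) := Real.one_le_exp (by positivity)
    have hQ : 0 ≤ L_v * Real.exp (L_v * h₀) * h₀ * (M_v + 1) + ε_FM := by positivity
    have heq : h₀ * ε_FM + (aa + aa * M_v)
        = h₀ * (L_v * Real.exp (L_v * h₀) * h₀ * (M_v + 1) + ε_FM) := by rw [haa]; ring
    rw [heq]
    nlinarith [mul_nonneg (mul_nonneg hh0.le (sub_nonneg.2 hE0)) hQ]
  | succ m ih =>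
    intro hm1 i hi
    have hmK : m ≤ K := le_trans (Nat.le_succ m) hm1
    have hiA : (2*i+1) * 2^m ≤ 2^K := by
      calc (2*i+1) * 2^m ≤ (2*i+2) * 2^m := Nat.mul_le_mul_right _ (by omega)
        _ = (i+1) * 2^(m+1) := by ring
        _ ≤ 2^K := hi
    have hiB : (2*i+1+1) * 2^m ≤ 2^K := by
      calc (2*i+1+1) * 2^m = (i+1) * 2^(m+1) := by ring
        _ ≤ 2^K := hi
    have ihA := ih hmK (2*i) hiA
    have ihB := ih hmK (2*i+1) hiB
    have hsc := hSC m hm1 (2*i) (by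
      calc (2*i+2) * 2^m = (i+1) * 2^(m+1) := by ring
        _ ≤ 2^K := hi)
    rw [show ((2:ℝ)^(m+1) * h₀) = 2 * ((2:ℝ)^m * h₀) from by ring]
    have eA : ((2*i : ℕ) : ℝ) * ((2:ℝ)^m * h₀) = (i : ℝ) * (2 * ((2:ℝ)^m * h₀)) := by
      push_cast; ring
    have eA1 : ((2*i+1 : ℕ) : ℝ) * ((2:ℝ)^m * h₀)
        = (i : ℝ) * (2 * ((2:ℝ)^m * h₀)) + (2:ℝ)^m * h₀ := by push_cast; ring
    have eA2 : ((2*i+1+1 : ℕ) : ℝ) * ((2:ℝ)^m * h₀)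
        = ((i+1 : ℕ) : ℝ) * (2 * ((2:ℝ)^m * h₀)) := by push_cast; ring
    rw [eA, eA1] at ihA
    rw [eA1, eA2] at ihB
    rw [eA] at hsc
    set hh := (2:ℝ)^m * h₀ with hhdef
    set T := (i : ℝ) * (2 * hh) with hT
    set TM := T + hh with hTM
    set TE := ((i+1 : ℕ) : ℝ) * (2 * hh) with hTE
    have hhh : 0 < hh := by rw [hhdef]; positivity
    -- times in [0,1]
    have hT01 : T ∈ Icc (0:ℝ) 1 := by
      have e : T = ((2*i*2^m : ℕ) : ℝ) * h₀ := by rw [hT, hhdef]; push_cast; ring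
      rw [e]; exact tmem _ (by calc 2*i*2^m ≤ (2*i+1)*2^m := Nat.mul_le_mul_right _ (by omega)
        _ ≤ 2^K := hiA)
    have hTM01 : TM ∈ Icc (0:ℝ) 1 := by
      have e : TM = (((2*i+1)*2^m : ℕ) : ℝ) * h₀ := by rw [hTM, hT, hhdef]; push_cast; ring
      rw [e]; exact tmem _ hiA
    have hTE01 : TE ∈ Icc (0:ℝ) 1 := by
      have e : TE = (((2*i+1+1)*2^m : ℕ) : ℝ) * h₀ := by rw [hTE, hhdef]; push_cast; ring
      rw [e]; exact tmem _ hiB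
    have hzT := hzmem T hT01
    have hzTM := hzmem TM hTM01
    have hzTE := hzmem TE hTE01
    have lipT : ∀ x y, ‖s x T hh - s y T hh‖ ≤ L * ‖x - y‖ := by
      intro x y
      have := hsLip T hT01 m hmK x y
      rwa [← hhdef] at this
    have lipTM : ∀ x y, ‖s x TM hh - s y TM hh‖ ≤ L * ‖x - y‖ := by
      intro x y
      have := hsLip TM hTM01 m hmK x y
      rwa [← hhdef] at this
    have lipTb : ∀ x y, ‖s x T (2 * hh) - s y T (2 * hh)‖ ≤ L * ‖x - y‖ := by
      intro x y
      have := hsLip T hT01 (m+1) hm1 x y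
      rwa [show ((2:ℝ)^(m+1) * h₀) = 2 * hh from by rw [hhdef]; ring] at this
    have key := key_step (P := P) (zT := z T) (zTM := z TM) (zTE := z TE)
      (fun x => s x T hh) (fun x => s x TM hh) (fun x => s x T (2 * hh))
      hhh hL hzT hzTM hzTE lipT lipTM lipTb ihA ihB hsc
    refine key.trans ?_
    -- final arithmetic
    set E1 := Real.exp (L * hh / 2) with hE1
    have hE1one : 1 ≤ E1 := Real.one_le_exp (by positivity)
    have hE1L : 1 + hh * L / 2 ≤ E1 := by
      have := Real.add_one_le_exp (hh * L / 2)
      rw [hE1, show L * hh / 2 = hh * L / 2 from by ring]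
      linarith
    have hX0 : 0 ≤ L_v * Real.exp (L_v * h₀) * h₀ * (M_v + 1) + ε_FM + (m : ℝ) * ε_SC := by
      have : 0 ≤ (m : ℝ) * ε_SC := by positivity
      have h2 : 0 ≤ L_v * Real.exp (L_v * h₀) * h₀ * (M_v + 1) := by positivity
      linarith
    rw [show L * (2 * hh) / 2 = L * hh / 2 + L * hh / 2 from by ring, Real.exp_add, ← hE1]
    push_cast
    set X := L_v * Real.exp (L_v * h₀) * h₀ * (M_v + 1) + ε_FM + (m : ℝ) * ε_SC with hXdef
    have hrhs : L_v * Real.exp (L_v * h₀) * h₀ * (M_v + 1) + ε_FM + ((m : ℝ) + 1) * ε_SC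
        = X + ε_SC := by rw [hXdef]; ring
    rw [hrhs]
    clear_value hh T TM TE E1 X
    have k1 : 0 ≤ 2 * hh * E1 * X * (E1 - (1 + hh * L / 2)) := by
      have h1 : 0 ≤ 2 * hh * E1 * X :=
        mul_nonneg (mul_nonneg (by linarith) (by linarith)) hX0
      exact mul_nonneg h1 (sub_nonneg.2 hE1L)
    have k2 : 0 ≤ 2 * hh * ε_SC * (E1 * E1 - 1) := by
      have h1 : 1 ≤ E1 * E1 := by nlinarith
      have h2 : 0 ≤ 2 * hh * ε_SC := by positivity
      exact mul_nonneg h2 (sub_nonneg.2 h1)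
    have e : 2*hh*(E1*E1)*(X+ε_SC) - ((1 + hh*L)*(hh*E1*X) + hh*E1*X + 2*hh*ε_SC)
        = 2*hh*E1*X*(E1 - (1 + hh*L/2)) + 2*hh*ε_SC*(E1*E1 - 1) := by ring
    linarith [k1, k2, e]
end
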